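/- arXiv:1204.3961 — 5 statements merged into one kernel-verified Lean document; each statement's English description precedes it below -/
import Mathlib

section
/- Let G be a group with a normal abelian subgroup A, and let f ∈ A generate a finite-index subgroup of A. Suppose ent: G → ℝ is conjugation-invariant with ent(gⁿ) = |n| ent(g) for all g, n, and ent(f) > 0. Then there is a positive integer k and a subgroup G₀ ≤ G with [G : G₀] ≤ 2 such that f^k is central in G₀ and G₀ is contained in the centralizer of f^k in G. -/
/-- If `A` is an abelian normal subgroup of `G`, `f ∈ A` has infinite order and generates a
finite-index subgroup of `A`, and `ent : G → ℝ` is conjugation-invariant with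
`ent (g^n) = |n| ent g` and `ent f > 0`, then there is a positive integer `k` and a subgroup
`G₀` of index at most 2 contained in the centralizer of `f^k`. -/
theorem stmt_4 {G : Type*} [Group G] (A : Subgroup G) (hA : A.Normal)
    (hab : ∀ a ∈ A, ∀ b ∈ A, a * b = b * a)
    (f : G) (hfA : f ∈ A) (hford : ¬ IsOfFinOrder f)
    (hfi : (Subgroup.zpowers f).relIndex A ≠ 0)
    (ent : G → ℝ)
    (hconj : ∀ g h : G, ent (h * g * h⁻¹) = ent g)
    (hpow : ∀ (g : G) (n : ℤ), ent (g ^ n) = |n| * ent g)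
    (hf : 0 < ent f) :
    ∃ k : ℕ, 0 < k ∧ ∃ G₀ : Subgroup G,
      G₀.index ≠ 0 ∧ G₀.index ≤ 2 ∧ G₀ ≤ Subgroup.centralizer {f ^ k} := by
  classical
  set n := (Subgroup.zpowers f).relIndex A with hn
  have hn0 : 0 < n := Nat.pos_of_ne_zero hfi
  set H : Subgroup A := (Subgroup.zpowers f).subgroupOf A with hH
  haveI : H.Normal := by
    refine ⟨fun x hx b => ?_⟩
    have hb : (b : G) * (x : G) = (x : G) * (b : G) := hab b b.2 x x.2
    have : b * x * b⁻¹ = x := by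
      ext
      push_cast
      rw [hb, mul_inv_cancel_right]
    rwa [this]
  -- key dichotomy
  have key : ∀ g : G, g * f ^ n * g⁻¹ = f ^ n ∨ g * f ^ n * g⁻¹ = (f ^ n)⁻¹ := by
    intro g
    have hmem : g * f * g⁻¹ ∈ A := hA.conj_mem f hfA g
    set a : A := ⟨g * f * g⁻¹, hmem⟩ with ha
    have hpow' : a ^ n ∈ H := by
      have := H.pow_index_mem a
      rwa [show H.index = n from rfl] at this
    have hz : ((a : G)) ^ n ∈ Subgroup.zpowers f := by
      rw [Subgroup.mem_subgroupOf] at hpow'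
      simpa using hpow'
    obtain ⟨m, hm⟩ := hz
    have hconjpow : (g * f * g⁻¹) ^ n = g * f ^ n * g⁻¹ := by
      rw [conj_pow]
    have hm' : f ^ m = g * f ^ n * g⁻¹ := by
      rw [← hconjpow]; exact hm
    -- entropy computation
    have h1 : ent (g * f ^ n * g⁻¹) = (n : ℝ) * ent f := by
      rw [hconj (f ^ n) g]
      have : f ^ n = f ^ (n : ℤ) := (zpow_natCast f n).symm
      rw [this, hpow]
      simp
    have h2 : ent (f ^ m) = |(m : ℝ)| * ent f := by
      rw [hpow]; push_cast; ring
    have habs : |(m : ℝ)| = (n : ℝ) := by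
      have := h2
      rw [hm', h1] at this
      exact mul_right_cancel₀ (ne_of_gt hf) this.symm
    have habsz : |m| = (n : ℤ) := by exact_mod_cast habs
    rcases (abs_eq (by positivity : (0:ℤ) ≤ (n:ℤ))).mp habsz with h | h
    · left
      rw [← hm', h, zpow_natCast]
    · right
      rw [← hm', h]
      rw [zpow_neg, zpow_natCast]
  have hne : f ^ n ≠ (f ^ n)⁻¹ := by
    intro h
    apply hford
    rw [isOfFinOrder_iff_pow_eq_one]
    refine ⟨2 * n, by omega, ?_⟩
    rw [two_mul, pow_add]
    nth_rewrite 1 [h]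
    rw [inv_mul_cancel]
  -- sign homomorphism
  set ε : G → ℤˣ := fun g => if g * f ^ n * g⁻¹ = f ^ n then 1 else -1 with hε
  have hεmul : ∀ g h : G, ε (g * h) = ε g * ε h := by
    intro g h
    have hgh : (g * h) * f ^ n * (g * h)⁻¹ = g * (h * f ^ n * h⁻¹) * g⁻¹ := by group
    have h3 : g * (f ^ n)⁻¹ * g⁻¹ = (g * f ^ n * g⁻¹)⁻¹ := by group
    rcases key h with hh | hh <;> rcases key g with hg | hg
    · have hval : (g * h) * f ^ n * (g * h)⁻¹ = f ^ n := by rw [hgh, hh, hg]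
      simp only [mul_inv_rev] at hval
      simp [hε, hval, hg, hh]
    · have hval : (g * h) * f ^ n * (g * h)⁻¹ = (f ^ n)⁻¹ := by rw [hgh, hh, hg]
      simp only [mul_inv_rev] at hval
      simp [hε, hval, hg, hh, hne, hne.symm]
    · have hval : (g * h) * f ^ n * (g * h)⁻¹ = (f ^ n)⁻¹ := by
        rw [hgh, hh, h3, hg]
      simp only [mul_inv_rev] at hval
      simp [hε, hval, hg, hh, hne, hne.symm]
    · have hval : (g * h) * f ^ n * (g * h)⁻¹ = f ^ n := by
        rw [hgh, hh, h3, hg, inv_inv]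
      simp only [mul_inv_rev] at hval
      simp [hε, hval, hg, hh, hne, hne.symm]
  -- package as a monoid hom
  have hε1 : ε 1 = 1 := by simp [hε]
  let φ : G →* ℤˣ := { toFun := ε, map_one' := hε1, map_mul' := hεmul }
  refine ⟨n, hn0, φ.ker, ?_, ?_, ?_⟩
  · rw [Subgroup.index_ker φ]
    have : Nonempty φ.range := ⟨1⟩
    exact Nat.card_ne_zero.mpr ⟨this, inferInstance⟩
  · rw [Subgroup.index_ker φ]
    calc Nat.card φ.range ≤ Nat.card ℤˣ := Subgroup.card_le_card_group _
    _ = 2 := by rw [Nat.card_eq_fintype_card, Fintype.card_units_int]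
  · intro g hg
    rw [Subgroup.mem_centralizer_iff]
    rintro x ⟨rfl⟩
    have : ε g = 1 := hg
    rw [hε] at this
    by_cases hc : g * f ^ n * g⁻¹ = f ^ n
    · have : f ^ n * g = g * f ^ n := by
        conv_lhs => rw [← hc]
        group
      exact this
    · simp only [hc, if_false] at this
      exact absurd this (by decide)
end

section
/- Let T₁, T₂, T₃ be elements of a group H such that T₁ and T₂ commute with T₃, T₃ has infinite order, and no finite-index subgroup of the subgroup generated by T₁ and T₂ is abelian. If G is a group in which every infinite-order element has virtually abelian centralizer, then every homomorphism ν: H → G has nontrivial kernel, i.e. there is no injective homomorphism from H to G. -/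
/-- Suppose `T₁, T₂, T₃ ∈ H`, where `T₁` and `T₂` commute with `T₃`, `T₃` has infinite order,
and no finite-index subgroup of `⟨T₁, T₂⟩` is abelian.  If every infinite-order element of `G`
has virtually abelian centralizer, then no homomorphism `H → G` is injective. -/
theorem stmt_7 {H G : Type*} [Group H] [Group G]
    (T₁ T₂ T₃ : H)
    (h13 : T₁ * T₃ = T₃ * T₁) (h23 : T₂ * T₃ = T₃ * T₂)
    (h3 : ¬ IsOfFinOrder T₃)
    (hna : ∀ K : Subgroup H, K ≤ Subgroup.closure {T₁, T₂} →
      K.relIndex (Subgroup.closure {T₁, T₂}) ≠ 0 →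
      ¬ ∀ a ∈ K, ∀ b ∈ K, a * b = b * a)
    (hG : ∀ g : G, ¬ IsOfFinOrder g →
      ∃ B : Subgroup (Subgroup.centralizer ({g} : Set G)),
        B.index ≠ 0 ∧ ∀ a b : B, a * b = b * a)
    (ν : H →* G) :
    ¬ Function.Injective ν := by
  intro hinj
  -- ν T₃ has infinite order
  have h3' : ¬ IsOfFinOrder (ν T₃) := by
    rw [← orderOf_eq_zero_iff] at h3 ⊢
    rwa [orderOf_injective ν hinj]
  set C : Subgroup G := Subgroup.centralizer ({ν T₃} : Set G) with hC
  obtain ⟨B, hBidx, hBab⟩ := hG (ν T₃) h3'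
  set B' : Subgroup G := B.map C.subtype with hB'
  -- closure {T₁, T₂} maps into C
  have hmapC : (Subgroup.closure {T₁, T₂}).map ν ≤ C := by
    rw [Subgroup.map_le_iff_le_comap, Subgroup.closure_le]
    rintro x (rfl | rfl) <;>
      simp only [SetLike.mem_coe, Subgroup.mem_comap, hC,
        Subgroup.mem_centralizer_iff, Set.mem_singleton_iff] <;>
      rintro y rfl <;> rw [← map_mul, ← map_mul]
    · rw [h13]
    · rw [h23]
  set K : Subgroup H := Subgroup.closure {T₁, T₂} ⊓ B'.comap ν with hK
  have hKle : K ≤ Subgroup.closure {T₁, T₂} := inf_le_left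
  -- relIndex
  have hrel : K.relIndex (Subgroup.closure {T₁, T₂}) ≠ 0 := by
    rw [hK, Subgroup.inf_relIndex_left]
    have h1 : B'.relIndex C = B.index := by
      rw [hB', Subgroup.relIndex, Subgroup.subgroupOf,
        Subgroup.comap_map_eq_self_of_injective C.subtype_injective]
    have h2 : B'.relIndex ((Subgroup.closure {T₁, T₂}).map ν) ≠ 0 := by
      intro h0
      exact hBidx (h1 ▸ Subgroup.relIndex_eq_zero_of_le_right hmapC h0)
    rw [Subgroup.relIndex_comap]
    exact h2
  refine hna K hKle hrel ?_
  intro a ha b hb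
  apply hinj
  rw [map_mul, map_mul]
  have haB : ν a ∈ B' := ha.2
  have hbB : ν b ∈ B' := hb.2
  obtain ⟨a', ha', heqa⟩ := haB
  obtain ⟨b', hb', heqb⟩ := hbB
  rw [← heqa, ← heqb, ← map_mul, ← map_mul]
  congr 1
  exact congrArg Subtype.val (hBab ⟨a', ha'⟩ ⟨b', hb'⟩)
end

section
/- Let g: ℝ → ℝ be a C¹ map with g(0) = 0 that commutes with the linear contraction f(t) = λt for some λ ∈ (0,1) (i.e., g(λt) = λ g(t) for all t). Then g is linear: g(t) = g'(0)·t for all t ∈ ℝ. -/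
/-! Iterating the functional equation gives `g (λⁿ t) = λⁿ g t`, so every difference quotient
of `g` at `0` along the sequence `λⁿ t → 0` equals `g t / t`; its limit is `g'(0)`. -/

open Filter Topology

theorem map_pow_mul_of_map_mul {M : Type*} [Monoid M] {g : M → M} {c : M}
    (hcomm : ∀ t, g (c * t) = c * g t) (n : ℕ) (t : M) : g (c ^ n * t) = c ^ n * g t := by
  induction n with
  | zero => simp
  | succ n ih => rw [pow_succ', mul_assoc, hcomm, ih, mul_assoc]

theorem slope_zero_pow_mul_of_map_mul {g : ℝ → ℝ} {c : ℝ} (hc : c ≠ 0) (h0 : g 0 = 0)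
    (hcomm : ∀ t, g (c * t) = c * g t) (n : ℕ) (t : ℝ) :
    slope g 0 (c ^ n * t) = slope g 0 t := by
  simp only [slope_def_field, h0, sub_zero, map_pow_mul_of_map_mul hcomm]
  exact mul_div_mul_left _ _ (pow_ne_zero n hc)

theorem eq_mul_of_hasDerivAt_zero_of_map_mul {g : ℝ → ℝ} {g' c : ℝ} (hc0 : c ≠ 0)
    (hc1 : |c| < 1) (hg : HasDerivAt g g' 0) (h0 : g 0 = 0)
    (hcomm : ∀ t, g (c * t) = c * g t) (t : ℝ) : g t = g' * t := by
  rcases eq_or_ne t 0 with rfl | ht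
  · simp [h0]
  have hseq : Tendsto (fun n : ℕ ↦ c ^ n * t) atTop (𝓝[≠] 0) := by
    refine tendsto_nhdsWithin_of_tendsto_nhds_of_eventually_within _ ?_
      (Eventually.of_forall fun n ↦ mul_ne_zero (pow_ne_zero n hc0) ht)
    simpa using (tendsto_pow_atTop_nhds_zero_of_abs_lt_one hc1).mul_const t
  have hslope : Tendsto (fun n : ℕ ↦ slope g 0 (c ^ n * t)) atTop (𝓝 g') :=
    (hasDerivAt_iff_tendsto_slope.mp hg).comp hseq
  simp only [slope_zero_pow_mul_of_map_mul hc0 h0 hcomm] at hslope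
  have hquot : slope g 0 t = g' := tendsto_nhds_unique tendsto_const_nhds hslope
  rw [slope_def_field, h0, sub_zero, sub_zero] at hquot
  rw [← hquot, div_mul_cancel₀ _ ht]

/-- A `C¹` map `g : ℝ → ℝ` with `g 0 = 0` commuting with the contraction `t ↦ λt`,
`λ ∈ (0,1)`, is linear: `g t = g'(0) · t`. -/
theorem stmt_8 (lam : ℝ) (hlam : lam ∈ Set.Ioo (0 : ℝ) 1)
    (g : ℝ → ℝ) (hg : ContDiff ℝ 1 g) (h0 : g 0 = 0)
    (hcomm : ∀ t : ℝ, g (lam * t) = lam * g t) :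
    ∀ t : ℝ, g t = deriv g 0 * t := by
  obtain ⟨hlam0, hlam1⟩ := hlam
  have hderiv : HasDerivAt g (deriv g 0) 0 := (hg.differentiable one_ne_zero 0).hasDerivAt
  exact eq_mul_of_hasDerivAt_zero_of_map_mul hlam0.ne'
    (by rwa [abs_of_pos hlam0]) hderiv h0 hcomm
end

section
/- Let G be a group acting freely by orientation-preserving homeomorphisms on the circle S¹ (i.e., every nontrivial element has no fixed point). Then G is abelian. -/
/-!
Each `g ≠ 1` has a continuous degree-one lift to `ℝ`, built from its displacement `g • t - t`,
which never vanishes. Two lifts of group elements are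
comparable pointwise, since lifts that cross agree at a point, which by freeness forces equal
elements and then equal lifts. For comparable lifts `H * F ≤ F * H` one has
`(F * H) ^ n ≤ F ^ n * H ^ n` and `H ^ n * F ^ n ≤ (H * F) ^ n`; as the translation number `τ`
is a quasimorphism, this makes `τ` additive on lifts. A lift of `(b * a)⁻¹ * (a * b)` therefore
has integral translation number, so it moves some point by an integer, i.e. `(b * a)⁻¹ * (a * b)`
has a fixed point on the circle and is trivial.
-/

open Function

local notation "τ" => CircleDeg1Lift.translationNumber

theorem le_of_forall_nat_mul_le_add {α : Type*} [Field α] [LinearOrder α]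
    [IsStrictOrderedRing α] [Archimedean α] {a b C : α} (h : ∀ n : ℕ, n * a ≤ n * b + C) :
    a ≤ b := by
  by_contra! hba
  obtain ⟨n, hn⟩ := exists_nat_gt (C / (a - b))
  rw [div_lt_iff₀ (sub_pos.2 hba)] at hn
  linarith [h n]

section OrderedMonoid

variable {M : Type*} [Monoid M] [Preorder M] [MulLeftMono M] [MulRightMono M] {a b : M}

theorem pow_mul_le_mul_pow_of_mul_le (h : b * a ≤ a * b) (n : ℕ) : b ^ n * a ≤ a * b ^ n := by
  induction n with
  | zero => simp
  | succ n ih =>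
    calc b ^ (n + 1) * a = b ^ n * (b * a) := by rw [pow_succ, mul_assoc]
      _ ≤ b ^ n * (a * b) := mul_le_mul_right h _
      _ = b ^ n * a * b := (mul_assoc _ _ _).symm
      _ ≤ a * b ^ n * b := mul_le_mul_left ih _
      _ = a * b ^ (n + 1) := by rw [pow_succ, mul_assoc]

theorem mul_pow_le_pow_mul_pow_of_mul_le (h : b * a ≤ a * b) (n : ℕ) :
    (a * b) ^ n ≤ a ^ n * b ^ n := by
  induction n with
  | zero => simp
  | succ n ih =>
    calc (a * b) ^ (n + 1) = (a * b) ^ n * (a * b) := pow_succ _ _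
      _ ≤ a ^ n * b ^ n * (a * b) := mul_le_mul_left ih _
      _ = a ^ n * (b ^ n * a) * b := by simp only [mul_assoc]
      _ ≤ a ^ n * (a * b ^ n) * b :=
        mul_le_mul_left (mul_le_mul_right (pow_mul_le_mul_pow_of_mul_le h n) _) _
      _ = a ^ (n + 1) * b ^ (n + 1) := by simp only [pow_succ, mul_assoc]

theorem pow_mul_pow_le_mul_pow_of_mul_le (h : b * a ≤ a * b) (n : ℕ) :
    b ^ n * a ^ n ≤ (b * a) ^ n :=
  @mul_pow_le_pow_mul_pow_of_mul_le Mᵒᵈ _ _ _ _ b a h n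

end OrderedMonoid

namespace CircleDeg1Lift

instance : MulLeftMono CircleDeg1Lift := ⟨fun f _ _ h x => f.mono (h x)⟩

instance : MulRightMono CircleDeg1Lift := ⟨fun f _ _ h x => h (f x)⟩

variable (f g : CircleDeg1Lift)

theorem map_sub_lt_translationNumber_add_one (x : ℝ) : f x - x < τ f + 1 :=
  (Int.lt_floor_add_one _).trans_le (by linarith [f.floor_sub_le_translationNumber x])

theorem translationNumber_sub_one_lt_map_sub (x : ℝ) : τ f - 1 < f x - x :=
  (sub_le_sub_right (f.translationNumber_le_ceil_sub x) 1).trans_lt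
    (by linarith [Int.ceil_lt_add_one (f x - x)])

theorem translationNumber_mul_le : τ (f * g) ≤ τ f + τ g + 2 :=
  translationNumber_le_of_le_add _ fun x => by
    linarith [f.map_sub_lt_translationNumber_add_one (g x),
      g.map_sub_lt_translationNumber_add_one x, mul_apply f g x]

theorem translationNumber_add_le_mul : τ f + τ g ≤ τ (f * g) + 2 := by
  have : τ f + τ g - 2 ≤ τ (f * g) := le_translationNumber_of_add_le _ fun x => by
    linarith [f.translationNumber_sub_one_lt_map_sub (g x),
      g.translationNumber_sub_one_lt_map_sub x, mul_apply f g x]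
  linarith

variable {f g}

theorem translationNumber_mul_eq_add_of_le (h : g * f ≤ f * g) : τ (f * g) = τ f + τ g := by
  have hcomm : τ (g * f) = τ (f * g) :=
    translationNumber_eq_of_semiconjBy (f := f) (mul_assoc f g f).symm
  apply le_antisymm
  · refine le_of_forall_nat_mul_le_add (C := 2) fun n => ?_
    calc n * τ (f * g) = τ ((f * g) ^ n) := (translationNumber_pow _ n).symm
      _ ≤ τ (f ^ n * g ^ n) := translationNumber_mono (mul_pow_le_pow_mul_pow_of_mul_le h n)
      _ ≤ τ (f ^ n) + τ (g ^ n) + 2 := translationNumber_mul_le _ _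
      _ = n * (τ f + τ g) + 2 := by simp only [translationNumber_pow]; ring
  · refine le_of_forall_nat_mul_le_add (C := 2) fun n => ?_
    calc n * (τ f + τ g) = τ (g ^ n) + τ (f ^ n) := by simp only [translationNumber_pow]; ring
      _ ≤ τ (g ^ n * f ^ n) + 2 := translationNumber_add_le_mul _ _
      _ ≤ τ ((g * f) ^ n) + 2 := by
        gcongr; exact translationNumber_mono (pow_mul_pow_le_mul_pow_of_mul_le h n)
      _ = n * τ (f * g) + 2 := by rw [translationNumber_pow, hcomm]

end CircleDeg1Lift

namespace AddCircle

theorem coe_add_int (x : ℝ) (n : ℤ) : ((x + n : ℝ) : AddCircle (1 : ℝ)) = x := by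
  rw [coe_add, add_eq_left, coe_eq_zero_iff 1]
  exact ⟨n, by simp⟩

theorem coe_eq_coe_iff_exists_int {x y : ℝ} :
    (x : AddCircle (1 : ℝ)) = y ↔ ∃ n : ℤ, y = x + n := by
  refine ⟨fun h => ?_, fun ⟨n, hn⟩ => hn ▸ (coe_add_int x n).symm⟩
  have hyx : ((y - x : ℝ) : AddCircle (1 : ℝ)) = 0 := by rw [coe_sub, h, sub_self]
  obtain ⟨n, hn⟩ := (coe_eq_zero_iff 1).1 hyx
  exact ⟨n, by rw [zsmul_one] at hn; linarith⟩

end AddCircle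

open AddCircle

theorem Continuous.monotone_of_injective_of_map_add_one {F : ℝ → ℝ} (hc : Continuous F)
    (hinj : Injective F) (h : ∀ x, F (x + 1) = F x + 1) : Monotone F := by
  refine ((hc.strictMono_of_inj hinj).resolve_right fun hanti => ?_).monotone
  have := hanti (zero_lt_one' ℝ)
  rw [← zero_add 1, h 0] at this
  linarith

namespace CircleDeg1Lift

structure IsLift (F : CircleDeg1Lift) (f : AddCircle (1 : ℝ) → AddCircle (1 : ℝ)) : Prop where
  continuous : Continuous F
  coe_apply : ∀ x : ℝ, (F x : AddCircle (1 : ℝ)) = f x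

section

variable {F H : CircleDeg1Lift} {f h : AddCircle (1 : ℝ) → AddCircle (1 : ℝ)}

theorem isLift_one : IsLift 1 fun x => x := ⟨continuous_id, fun _ => rfl⟩

theorem IsLift.mul (hF : IsLift F f) (hH : IsLift H h) : IsLift (F * H) (f ∘ h) :=
  ⟨hF.continuous.comp hH.continuous, fun x => by simp [hF.coe_apply, hH.coe_apply]⟩

theorem IsLift.eq_of_apply_eq (hF : IsLift F f) (hH : IsLift H f) {x : ℝ} (hx : F x = H x) :
    F = H :=
  DFunLike.coe_injective <| (isCoveringMap_coe (1 : ℝ)).eq_of_comp_eq hF.continuous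
    hH.continuous (funext fun y => by simp [hF.coe_apply, hH.coe_apply]) x hx

theorem IsLift.apply_eq_of_apply_eq_add_int (hF : IsLift F f) {x : ℝ} {m : ℤ}
    (hx : F x = x + m) : f x = x := by
  rw [← hF.coe_apply, hx, coe_add_int]

theorem IsLift.exists_translationNumber_eq_int (hF : IsLift F fun x => x) :
    ∃ m : ℤ, τ F = m := by
  obtain ⟨m, hm⟩ := coe_eq_coe_iff_exists_int.1 (hF.coe_apply 0).symm
  exact ⟨m, translationNumber_of_eq_add_int F hm⟩

theorem exists_isLift (hc : Continuous f) (hinj : Injective f) (hfix : ∀ x, f x ≠ x) :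
    ∃ F, IsLift F f := by
  have : Fact ((0 : ℝ) < 1) := ⟨one_pos⟩
  -- `F t = t + δ t`, where `δ t ∈ [0, 1)` represents the displacement `f t - t ≠ 0`
  set δ : ℝ → ℝ := fun t => equivIco 1 0 (f t - (t : AddCircle (1 : ℝ)))
  have hδ_cont : Continuous δ := by
    refine continuous_subtype_val.comp
      (f := equivIco 1 0 ∘ fun t : ℝ => f t - (t : AddCircle (1 : ℝ)))
      (continuous_iff_continuousAt.2 fun t => ?_)
    refine (continuousAt_equivIco 1 0 ?_).comp (by fun_prop)
    simpa [sub_eq_zero] using hfix t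
  have hδ_coe : ∀ t, (δ t : AddCircle (1 : ℝ)) = f t - t := fun _ => coe_equivIco
  have hδ_add_int : ∀ t (n : ℤ), δ (t + n) = δ t := fun t n => by simp only [δ, coe_add_int]
  set F₀ : ℝ → ℝ := fun t => t + δ t
  have hF₀_coe : ∀ t, (F₀ t : AddCircle (1 : ℝ)) = f t := fun t => by
    simp only [F₀, coe_add, hδ_coe, add_sub_cancel]
  have hF₀_cont : Continuous F₀ := continuous_id.add hδ_cont
  have hF₀_add_int : ∀ t (n : ℤ), F₀ (t + n) = F₀ t + n := fun t n => by
    simp only [F₀, hδ_add_int]; ring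
  have hF₀_inj : Injective F₀ := fun s t hst => by
    have hfst : f s = f t := by rw [← hF₀_coe s, ← hF₀_coe t, hst]
    obtain ⟨n, rfl⟩ := coe_eq_coe_iff_exists_int.1 (hinj hfst)
    rw [hF₀_add_int, left_eq_add, Int.cast_eq_zero] at hst
    simp [hst]
  have hF₀_add_one : ∀ t, F₀ (t + 1) = F₀ t + 1 := fun t => by
    exact_mod_cast hF₀_add_int t 1
  exact ⟨⟨⟨F₀, hF₀_cont.monotone_of_injective_of_map_add_one hF₀_inj hF₀_add_one⟩,
    hF₀_add_one⟩, hF₀_cont, hF₀_coe⟩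

end

section FreeAction

variable {G : Type*} [Group G] [MulAction G (AddCircle (1 : ℝ))] {F H : CircleDeg1Lift} {g h : G}

theorem IsLift.mul_smul (hF : IsLift F (g • ·)) (hH : IsLift H (h • ·)) :
    IsLift (F * H) ((g * h) • ·) := by
  simpa only [comp_def, smul_smul] using hF.mul hH

theorem exists_isLift_smul (hcont : ∀ g : G, Continuous fun x : AddCircle (1 : ℝ) => g • x)
    (hfree : ∀ g : G, g ≠ 1 → ∀ x : AddCircle (1 : ℝ), g • x ≠ x) (g : G) :
    ∃ F, IsLift F (g • ·) := by
  rcases eq_or_ne g 1 with rfl | hg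
  · exact ⟨1, by simpa only [one_smul] using isLift_one⟩
  · exact exists_isLift (hcont g) (MulAction.injective g) (hfree g hg)

theorem le_total_of_isLift_smul
    (hfree : ∀ g : G, g ≠ 1 → ∀ x : AddCircle (1 : ℝ), g • x ≠ x)
    (hF : IsLift F (g • ·)) (hH : IsLift H (h • ·)) : F ≤ H ∨ H ≤ F := by
  by_contra! hFH
  change ¬(∀ x, F x ≤ H x) ∧ ¬∀ x, H x ≤ F x at hFH
  simp only [not_forall, not_le] at hFH
  obtain ⟨⟨u, hu⟩, ⟨v, hv⟩⟩ := hFH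
  obtain ⟨w, hw⟩ := intermediate_value_univ₂ hF.continuous hH.continuous hv.le hu.le
  have hgh : g = h := by
    by_contra hne
    refine hfree (h⁻¹ * g) (by rwa [ne_eq, inv_mul_eq_one, eq_comm]) w ?_
    rw [mul_smul, ← hF.coe_apply, hw, hH.coe_apply, inv_smul_smul]
  subst hgh
  rw [hF.eq_of_apply_eq hH hw] at hu
  exact lt_irrefl _ hu

theorem translationNumber_mul_of_isLift_smul
    (hfree : ∀ g : G, g ≠ 1 → ∀ x : AddCircle (1 : ℝ), g • x ≠ x)
    (hF : IsLift F (g • ·)) (hH : IsLift H (h • ·)) : τ (F * H) = τ F + τ H := by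
  rcases le_total_of_isLift_smul hfree (hH.mul_smul hF) (hF.mul_smul hH) with hle | hle
  · exact translationNumber_mul_eq_add_of_le hle
  · rw [← translationNumber_eq_of_semiconjBy (mul_assoc F H F).symm,
      translationNumber_mul_eq_add_of_le hle, add_comm]

theorem eq_one_of_isLift_smul_of_translationNumber_eq_int
    (hfree : ∀ g : G, g ≠ 1 → ∀ x : AddCircle (1 : ℝ), g • x ≠ x)
    (hF : IsLift F (g • ·)) {m : ℤ} (hm : τ F = m) : g = 1 := by
  obtain ⟨x, hx⟩ := (translationNumber_eq_int_iff F hF.continuous).1 hm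
  by_contra hg
  exact hfree g hg x (hF.apply_eq_of_apply_eq_add_int hx)

end FreeAction

end CircleDeg1Lift

open CircleDeg1Lift in
/-- Hölder's theorem: a group acting freely by homeomorphisms on the circle `S¹ = ℝ/ℤ`
is abelian.  (A free action on the circle is automatically by orientation-preserving
homeomorphisms.) -/
theorem stmt_13 {G : Type*} [Group G] [MulAction G (AddCircle (1 : ℝ))]
    (hcont : ∀ g : G, Continuous fun x : AddCircle (1 : ℝ) => g • x)
    (hfree : ∀ g : G, g ≠ 1 → ∀ x : AddCircle (1 : ℝ), g • x ≠ x) :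
    ∀ a b : G, a * b = b * a := by
  intro a b
  obtain ⟨F, hF⟩ := exists_isLift_smul hcont hfree a
  obtain ⟨H, hH⟩ := exists_isLift_smul hcont hfree b
  obtain ⟨K, hK⟩ := exists_isLift_smul hcont hfree (b * a)⁻¹
  -- `H * F * K` lifts the identity, so `τ K + τ F + τ H` is an integer
  have hHFK : IsLift (H * F * K) fun x => x := by
    simpa only [mul_inv_cancel, one_smul] using (hH.mul_smul hF).mul_smul hK
  obtain ⟨m, hm⟩ := hHFK.exists_translationNumber_eq_int
  have hKFH : τ (K * F * H) = m := by
    simp only [← hm, translationNumber_mul_of_isLift_smul hfree (hK.mul_smul hF) hH,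
      translationNumber_mul_of_isLift_smul hfree (hH.mul_smul hF) hK,
      translationNumber_mul_of_isLift_smul hfree hK hF,
      translationNumber_mul_of_isLift_smul hfree hH hF]
    ring
  have hcomm := eq_one_of_isLift_smul_of_translationNumber_eq_int hfree
    ((hK.mul_smul hF).mul_smul hH) hKFH
  rwa [mul_assoc, inv_mul_eq_one, eq_comm] at hcomm
end

section
/- Let C ⊂ int(M) be a closed connected nowhere dense subset of a surface M (or more generally a topological space M that is a connected manifold) whose complement has exactly two components U₁ and U₂. Set C' = fr(U₁) ∩ fr(U₂). Then C' ⊆ C is closed, M \ C' has exactly two components V₁ ⊇ U₁ and V₂ ⊇ U₂, fr(V₁) = fr(V₂) = C', each Vᵢ equals the interior of its closure, and Uᵢ is dense in Vᵢ. -/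
/-! Since `C` is nowhere dense, `U₁ ∪ U₂` is dense, so `closure U₁ ∪ closure U₂ = M`;
and since the `Uᵢ` are disjoint and open, `C' = closure U₁ ∩ closure U₂`. The sets
`V₁ = (closure U₂)ᶜ` and `V₂ = (closure U₁)ᶜ` are squeezed between `Uᵢ` and `closure Uᵢ`, which
gives connectedness and `closure Vᵢ = closure Uᵢ`; everything else is a computation with
complements. -/

open Set

section DisjointOpenPair

variable {X : Type*} [TopologicalSpace X] {U₁ U₂ : Set X}

theorem closure_inter_closure_subset_compl_union (h₁ : IsOpen U₁) (h₂ : IsOpen U₂)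
    (hd : Disjoint U₁ U₂) :
    closure U₁ ∩ closure U₂ ⊆ (U₁ ∪ U₂)ᶜ := fun _ ⟨hx₁, hx₂⟩ hx ↦
  hx.elim (disjoint_left.1 (hd.symm.closure_left h₁) hx₂)
    (disjoint_left.1 (hd.closure_left h₂) hx₁)

theorem closure_inter_closure_eq_frontier_inter_frontier (h₁ : IsOpen U₁) (h₂ : IsOpen U₂)
    (hd : Disjoint U₁ U₂) :
    closure U₁ ∩ closure U₂ = frontier U₁ ∩ frontier U₂ := by
  have hC := closure_inter_closure_subset_compl_union h₁ h₂ hd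
  rw [compl_union] at hC
  rw [h₁.frontier_eq, h₂.frontier_eq]
  ext x
  exact ⟨fun hx ↦ ⟨⟨hx.1, (hC hx).1⟩, hx.2, (hC hx).2⟩, fun ⟨⟨hx₁, _⟩, hx₂, _⟩ ↦ ⟨hx₁, hx₂⟩⟩

theorem subset_compl_closure (h₁ : IsOpen U₁) (hd : Disjoint U₁ U₂) :
    U₁ ⊆ (closure U₂)ᶜ :=
  subset_compl_iff_disjoint_right.2 (hd.closure_right h₁)

theorem compl_closure_subset_closure (hU : Dense (U₁ ∪ U₂)) :
    (closure U₂)ᶜ ⊆ closure U₁ := by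
  rw [compl_subset_iff_union, union_comm, ← closure_union, hU.closure_eq]

theorem closure_compl_closure_eq (h₁ : IsOpen U₁) (hd : Disjoint U₁ U₂)
    (hU : Dense (U₁ ∪ U₂)) :
    closure (closure U₂)ᶜ = closure U₁ :=
  (closure_minimal (compl_closure_subset_closure hU) isClosed_closure).antisymm
    (closure_mono (subset_compl_closure h₁ hd))

theorem interior_closure_eq_compl_closure (h₂ : IsOpen U₂) (hd : Disjoint U₁ U₂)
    (hU : Dense (U₁ ∪ U₂)) :
    interior (closure U₁) = (closure U₂)ᶜ := by
  refine Subset.antisymm ?_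
    (interior_maximal (compl_closure_subset_closure hU) isClosed_closure.isOpen_compl)
  rw [← interior_compl]
  exact interior_mono (subset_compl_iff_disjoint_right.2 (hd.closure_left h₂))

theorem frontier_compl_closure_eq (h₂ : IsOpen U₂) (hd : Disjoint U₁ U₂)
    (hU : Dense (U₁ ∪ U₂)) :
    frontier (closure U₁)ᶜ = closure U₁ ∩ closure U₂ := by
  rw [frontier_compl, frontier, closure_closure, interior_closure_eq_compl_closure h₂ hd hU,
    sdiff_compl]

theorem disjoint_compl_closure (hU : Dense (U₁ ∪ U₂)) :
    Disjoint (closure U₂)ᶜ (closure U₁)ᶜ := by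
  rw [disjoint_iff_inter_eq_empty, ← compl_union, union_comm, ← closure_union, hU.closure_eq,
    compl_univ]

theorem IsConnected.compl_closure (hc : IsConnected U₁) (h₁ : IsOpen U₁) (hd : Disjoint U₁ U₂)
    (hU : Dense (U₁ ∪ U₂)) :
    IsConnected (closure U₂)ᶜ :=
  hc.subset_closure (subset_compl_closure h₁ hd) (compl_closure_subset_closure hU)

end DisjointOpenPair

theorem stmt_18_general {M : Type*} [TopologicalSpace M]
    (C : Set M)
    (hCnwd : interior C = ∅)
    (U₁ U₂ : Set M) (hU₁ : IsOpen U₁) (hU₂ : IsOpen U₂)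
    (hU₁conn : IsConnected U₁) (hU₂conn : IsConnected U₂)
    (hdisj : Disjoint U₁ U₂) (hcompl : U₁ ∪ U₂ = Cᶜ) :
    frontier U₁ ∩ frontier U₂ ⊆ C ∧
      IsClosed (frontier U₁ ∩ frontier U₂) ∧
      ∃ V₁ V₂ : Set M,
        U₁ ⊆ V₁ ∧ U₂ ⊆ V₂ ∧
        IsOpen V₁ ∧ IsOpen V₂ ∧
        IsConnected V₁ ∧ IsConnected V₂ ∧
        Disjoint V₁ V₂ ∧
        V₁ ∪ V₂ = (frontier U₁ ∩ frontier U₂)ᶜ ∧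
        frontier V₁ = frontier U₁ ∩ frontier U₂ ∧
        frontier V₂ = frontier U₁ ∩ frontier U₂ ∧
        V₁ = interior (closure V₁) ∧ V₂ = interior (closure V₂) ∧
        V₁ ⊆ closure U₁ ∧ V₂ ⊆ closure U₂ := by
  have hU : Dense (U₁ ∪ U₂) := hcompl ▸ interior_eq_empty_iff_dense_compl.1 hCnwd
  have hU' : Dense (U₂ ∪ U₁) := union_comm U₁ U₂ ▸ hU
  rw [← closure_inter_closure_eq_frontier_inter_frontier hU₁ hU₂ hdisj]
  refine ⟨(closure_inter_closure_subset_compl_union hU₁ hU₂ hdisj).trans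
      (by rw [hcompl, compl_compl]), isClosed_closure.inter isClosed_closure,
    (closure U₂)ᶜ, (closure U₁)ᶜ, subset_compl_closure hU₁ hdisj,
    subset_compl_closure hU₂ hdisj.symm, isClosed_closure.isOpen_compl,
    isClosed_closure.isOpen_compl, hU₁conn.compl_closure hU₁ hdisj hU,
    hU₂conn.compl_closure hU₂ hdisj.symm hU', disjoint_compl_closure hU,
    by rw [compl_inter, union_comm], ?_, frontier_compl_closure_eq hU₂ hdisj hU, ?_, ?_,
    compl_closure_subset_closure hU, compl_closure_subset_closure hU'⟩
  · rw [frontier_compl_closure_eq hU₁ hdisj.symm hU', inter_comm]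
  · rw [closure_compl_closure_eq hU₁ hdisj hU, interior_closure_eq_compl_closure hU₂ hdisj hU]
  · rw [closure_compl_closure_eq hU₂ hdisj.symm hU',
      interior_closure_eq_compl_closure hU₁ hdisj.symm hU']

/-- Trimming lemma: if `C` is a closed, connected, nowhere dense subset of a connected
(locally connected) manifold `M` whose complement has exactly two components `U₁, U₂`,
then `C' = fr(U₁) ∩ fr(U₂)` is a closed subset of `C` and `M \ C'` has exactly two
components `V₁ ⊇ U₁` and `V₂ ⊇ U₂`, each with frontier `C'`, each equal to the interior
of its closure, and `Uᵢ` is dense in `Vᵢ`. -/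
theorem stmt_18 {M : Type*} [TopologicalSpace M] [ConnectedSpace M]
    [LocallyConnectedSpace M]
    (C : Set M) (hCclosed : IsClosed C) (hCconn : IsConnected C)
    (hCnwd : interior C = ∅)
    (U₁ U₂ : Set M) (hU₁ : IsOpen U₁) (hU₂ : IsOpen U₂)
    (hU₁conn : IsConnected U₁) (hU₂conn : IsConnected U₂)
    (hdisj : Disjoint U₁ U₂) (hcompl : U₁ ∪ U₂ = Cᶜ) :
    frontier U₁ ∩ frontier U₂ ⊆ C ∧
      IsClosed (frontier U₁ ∩ frontier U₂) ∧
      ∃ V₁ V₂ : Set M,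
        U₁ ⊆ V₁ ∧ U₂ ⊆ V₂ ∧
        IsOpen V₁ ∧ IsOpen V₂ ∧
        IsConnected V₁ ∧ IsConnected V₂ ∧
        Disjoint V₁ V₂ ∧
        V₁ ∪ V₂ = (frontier U₁ ∩ frontier U₂)ᶜ ∧
        frontier V₁ = frontier U₁ ∩ frontier U₂ ∧
        frontier V₂ = frontier U₁ ∩ frontier U₂ ∧
        V₁ = interior (closure V₁) ∧ V₂ = interior (closure V₂) ∧
        V₁ ⊆ closure U₁ ∧ V₂ ⊆ closure U₂ :=
  stmt_18_general C hCnwd U₁ U₂ hU₁ hU₂ hU₁conn hU₂conn hdisj hcompl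
end
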